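/- For every Turing machine M and input w, there exists a computably constructed learning algorithm A' and dataset d such that A' underfits d at all iterations if and only if M does not halt on w. -/

import Mathlib

open Nat.Partrec (Code)

/-- Datasets: a single training example with `k-1` binary features (encoded as an
element of `Fin (2^(k-1))`) and one binary label. -/
abbrev LDataset (k : ℕ) := Fin (2 ^ (k - 1)) × Bool

/-- The model produced at iteration `i` by the encoded learning algorithm `c` on
dataset `d`: the algorithm is run (for `i` steps) on the encoded pair of the dataset
and a query feature vector, producing a binary label (defaulting to `0`, the
initial constant-zero model, while the computation has not yet converged). -/
def modelOf (k : ℕ) (c : Code) (i : ℕ) (d : LDataset k) (x : Fin (2 ^ (k - 1))) : Bool :=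
  (Nat.Partrec.Code.evaln i c (Nat.pair (Encodable.encode d) (x : ℕ))).getD 0 ≠ 0

/-- Pointwise information transfer `C_A(g,d) = log₂ (p(g|d) / p(g))` of the model
`g = A d` from the dataset `d`, for a deterministic map `A` from datasets to models
and `d` drawn uniformly from the `2^k` possible datasets: here `p(g|d) = 1` and
`p(g) = |{d' : A d' = A d}| / 2^k`. -/
noncomputable def transfer (k : ℕ)
    (A : LDataset k → (Fin (2 ^ (k - 1)) → Bool)) (d : LDataset k) : ℝ :=
  Real.logb 2 (1 / (((Finset.univ.filter fun d' : LDataset k => A d' = A d).card : ℝ) / 2 ^ k))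

/-- The algorithm encoded by `c` underfits `d` at all iterations: at every
iteration `i`, the pointwise information transfer of the produced model is
strictly less than the dataset complexity `C d`. -/
noncomputable def UnderfitsAlways (k : ℕ) (C : LDataset k → ℝ) (c : Code) (d : LDataset k) : Prop :=
  ∀ i : ℕ, transfer k (modelOf k c i) d < C d
section Aux

open Nat.Partrec.Code

private def gFun : ℕ →. ℕ := fun z =>
  (((Denumerable.ofNat Code) z.unpair.1.unpair.1).eval z.unpair.1.unpair.2).map
    fun _ => z.unpair.2.unpair.1 / 2 ^ z.unpair.2.unpair.2 % 2

private lemma gFun_partrec : Nat.Partrec gFun := by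
  have u1 : Primrec fun z : ℕ => z.unpair.1 := Primrec.fst.comp Primrec.unpair
  have u2 : Primrec fun z : ℕ => z.unpair.2 := Primrec.snd.comp Primrec.unpair
  have hpow : Primrec₂ (· ^ · : ℕ → ℕ → ℕ) := Primrec₂.unpaired'.1 Nat.Primrec.pow
  have hv : Computable fun z : ℕ => z.unpair.2.unpair.1 / 2 ^ z.unpair.2.unpair.2 % 2 :=
    (Primrec.nat_mod.comp
      (Primrec.nat_div.comp (u1.comp u2)
        (hpow.comp (Primrec.const 2) (u2.comp u2)))
      (Primrec.const 2)).to_comp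
  have heval : Partrec fun z : ℕ =>
      ((Denumerable.ofNat Code) z.unpair.1.unpair.1).eval z.unpair.1.unpair.2 :=
    eval_part.comp ((Computable.ofNat Code).comp (u1.comp u1).to_comp)
      (u2.comp u1).to_comp
  exact Partrec.nat_iff.1 (heval.map (hv.comp Computable.fst).to₂)

private lemma card_univ_LDataset (k : ℕ) (hk : 1 ≤ k) :
    (Finset.univ : Finset (LDataset k)).card = 2 ^ k := by
  rw [Finset.card_univ, Fintype.card_prod, Fintype.card_fin, Fintype.card_bool, ← pow_succ]
  congr 1; omega

private lemma transfer_of_all_eq {k : ℕ} (hk : 1 ≤ k)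
    {A : LDataset k → (Fin (2 ^ (k - 1)) → Bool)} {d : LDataset k}
    (h : ∀ d', A d' = A d) : transfer k A d = 0 := by
  have hfil : (Finset.univ.filter fun d' : LDataset k => A d' = A d) = Finset.univ :=
    Finset.filter_true_of_mem fun d' _ => h d'
  rw [transfer, hfil, card_univ_LDataset k hk]
  push_cast
  rw [div_self (by positivity), div_one, Real.logb_one]

private lemma transfer_of_inj {k : ℕ}
    {A : LDataset k → (Fin (2 ^ (k - 1)) → Bool)} {d : LDataset k}
    (h : ∀ d', A d' = A d → d' = d) : transfer k A d = k := by
  have hfil : (Finset.univ.filter fun d' : LDataset k => A d' = A d) = {d} := by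
    ext d'
    simp only [Finset.mem_filter, Finset.mem_univ, true_and, Finset.mem_singleton]
    exact ⟨h d', by rintro rfl; rfl⟩
  rw [transfer, hfil, Finset.card_singleton]
  rw [Nat.cast_one, one_div_one_div, Real.logb_pow, Real.logb_self_eq_one (by norm_num)]
  ring

private lemma two_mul_le_two_pow {m : ℕ} (hm : 1 ≤ m) : 2 * m ≤ 2 ^ m := by
  induction m with
  | zero => omega
  | succ n ih =>
    rcases Nat.eq_or_lt_of_le hm with h | h
    · simp [← h]
    · have h1 : 1 ≤ n := by omega
      have := ih h1
      have h2 : 2 ≤ 2 ^ n := by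
        calc 2 = 2 * 1 := by ring
        _ ≤ 2 * n := by omega
        _ ≤ 2 ^ n := this
      calc 2 * (n + 1) = 2 * n + 2 := by ring
      _ ≤ 2 ^ n + 2 ^ n := by omega
      _ = 2 ^ (n + 1) := by ring

private lemma encode_lt {k : ℕ} (hk : 1 < k) (d : LDataset k) :
    Encodable.encode d < 2 ^ (2 ^ (k - 1)) := by
  obtain ⟨a, b⟩ := d
  rw [show (Encodable.encode (a, b) : ℕ) =
      Nat.pair (Encodable.encode a) (Encodable.encode b) from Encodable.encode_prod_val a b]
  have ha : (Encodable.encode a : ℕ) = a.val := rfl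
  have hb : (Encodable.encode b : ℕ) ≤ 1 := by cases b <;> simp [Encodable.encode_true, Encodable.encode_false]
  have h2 : (2:ℕ) ≤ 2 ^ (k - 1) := by
    calc (2:ℕ) = 2 ^ 1 := rfl
    _ ≤ 2 ^ (k - 1) := Nat.pow_le_pow_right (by norm_num) (by omega)
  have hmax : max (Encodable.encode a) (Encodable.encode b) + 1 ≤ 2 ^ (k - 1) := by
    have : a.val < 2 ^ (k - 1) := a.isLt
    rw [ha]; omega
  calc Nat.pair (Encodable.encode a) (Encodable.encode b)
      < (max (Encodable.encode a) (Encodable.encode b) + 1) ^ 2 :=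
        Nat.pair_lt_max_add_one_sq _ _
    _ ≤ (2 ^ (k - 1)) ^ 2 := Nat.pow_le_pow_left hmax 2
    _ = 2 ^ (2 * (k - 1)) := by rw [← pow_mul, mul_comm]
    _ ≤ 2 ^ (2 ^ (k - 1)) :=
        Nat.pow_le_pow_right (by norm_num) (two_mul_le_two_pow (by omega))

end Aux

section Main
open Nat.Partrec.Code

/-- For every Turing machine `M` and input `w`, one can computably construct a
learning algorithm `A'` and a dataset `d` such that `A'` underfits `d` at all
iterations if and only if `M` does not halt on `w`. (`A'` first outputs the
constant-zero model, then simulates `M` on `w`, and on halting switches to a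
model memorizing the single datapoint `d`.) -/
theorem exists_builder (k : ℕ) (hk : 1 < k)
    (C : LDataset k → ℝ) (hC : ∀ d, 0 < C d ∧ C d ≤ k) :
    ∃ F : Code × ℕ → Code, Computable F ∧
      ∀ (M : Code) (w : ℕ), ∃ d : LDataset k,
        (UnderfitsAlways k C (F (M, w)) d ↔ ¬ (M.eval w).Dom) := by
  obtain ⟨c₀, hc₀⟩ := exists_code.1 gFun_partrec
  refine ⟨fun p => Code.curry c₀ (Nat.pair (Encodable.encode p.1) p.2), ?_, ?_⟩
  · exact primrec₂_curry.to_comp.comp (Computable.const c₀)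
      (Primrec₂.natPair.to_comp.comp (Computable.encode.comp Computable.fst) Computable.snd)
  intro M w
  have hpos : (0:ℕ) < 2 ^ (k - 1) := Nat.pow_pos (by norm_num)
  refine ⟨(⟨0, hpos⟩, false), ?_⟩
  set d : LDataset k := (⟨0, hpos⟩, false) with hd
  set c : Code := Code.curry c₀ (Nat.pair (Encodable.encode M) w) with hc
  have hev : ∀ n : ℕ, c.eval n =
      (M.eval w).map fun _ => n.unpair.1 / 2 ^ n.unpair.2 % 2 := by
    intro n
    rw [hc, eval_curry, hc₀]
    simp [gFun, Nat.unpair_pair, Denumerable.ofNat_encode]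
  constructor
  · -- UnderfitsAlways → ¬Dom, by contraposition: if halts, some iteration is injective
    intro hU hdom
    obtain ⟨a, ha⟩ := Part.dom_iff_mem.1 hdom
    have hmem : ∀ p : LDataset k × Fin (2 ^ (k - 1)),
        (Encodable.encode p.1 / 2 ^ (p.2 : ℕ) % 2) ∈
          c.eval (Nat.pair (Encodable.encode p.1) (p.2 : ℕ)) := by
      intro p
      rw [hev]
      refine Part.mem_map_iff _ |>.2 ⟨a, ha, ?_⟩
      simp [Nat.unpair_pair]
    choose I hI using fun p => evaln_complete.1 (hmem p)
    set i : ℕ := Finset.univ.sup I with hi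
    have hmodel : ∀ (d' : LDataset k) (x : Fin (2 ^ (k - 1))),
        modelOf k c i d' x = Nat.testBit (Encodable.encode d') (x : ℕ) := by
      intro d' x
      have h1 := evaln_mono (Finset.le_sup (Finset.mem_univ (d', x))) (hI (d', x))
      have h2 : evaln i c (Nat.pair (Encodable.encode d') (x : ℕ)) =
          some (Encodable.encode d' / 2 ^ (x : ℕ) % 2) := h1
      rw [modelOf, h2, Nat.testBit_eq_decide_div_mod_eq]
      rcases Nat.mod_two_eq_zero_or_one (Encodable.encode d' / 2 ^ (x : ℕ)) with h | h <;>
        simp [h]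
    have hinj : ∀ d', modelOf k c i d' = modelOf k c i d → d' = d := by
      intro d' hmm
      apply Encodable.encode_injective
      apply Nat.eq_of_testBit_eq
      intro j
      by_cases hj : j < 2 ^ (k - 1)
      · have := congrFun hmm ⟨j, hj⟩
        rw [hmodel, hmodel] at this
        exact this
      · rw [Nat.testBit_eq_false_of_lt, Nat.testBit_eq_false_of_lt]
        · exact lt_of_lt_of_le (encode_lt hk d)
            (Nat.pow_le_pow_right (by norm_num) (by omega))
        · exact lt_of_lt_of_le (encode_lt hk d')
            (Nat.pow_le_pow_right (by norm_num) (by omega))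
    have := hU i
    rw [transfer_of_inj hinj] at this
    exact absurd (lt_of_le_of_lt (hC d).2 this) (lt_irrefl _)
  · -- ¬Dom → UnderfitsAlways: all models are the constant-zero model
    intro hnd i
    have hnone : ∀ n : ℕ, evaln i c n = none := by
      intro n
      rw [Option.eq_none_iff_forall_not_mem]
      intro x hx
      have := evaln_sound hx
      rw [hev] at this
      obtain ⟨b, hb, -⟩ := (Part.mem_map_iff _).1 this
      exact hnd (Part.dom_iff_mem.2 ⟨b, hb⟩)
    have hall : ∀ d', modelOf k c i d' = modelOf k c i d := by
      intro d'
      funext x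
      rw [modelOf, modelOf, hnone, hnone]
    rw [transfer_of_all_eq (by omega) hall]
    exact (hC d).1

end Main
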